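/- arXiv:0805.0357 — 3 statements merged into one kernel-verified Lean document; each statement's English description precedes it below -/
import Mathlib

section
/- A 2×2 matrix A = [[a,b],[c,d]] with entries in the real quaternions ℍ is invertible in the ring of 2×2 quaternionic matrices if and only if det_ℍ(A) ≠ 0. -/
open scoped Quaternion

/-- The Dieudonné determinant of a 2×2 quaternionic matrix. -/
noncomputable def detH (A : Matrix (Fin 2) (Fin 2) ℍ[ℝ]) : ℝ :=
  Real.sqrt (‖A 0 0‖ ^ 2 * ‖A 1 1‖ ^ 2 + ‖A 1 0‖ ^ 2 * ‖A 0 1‖ ^ 2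
    - 2 * (A 1 0 * star (A 0 0) * A 0 1 * star (A 1 1)).re)

/-!
Gaussian elimination over a division ring: for `a ≠ 0` the matrix `!![a, b; c, d]` is a lower
unitriangular matrix times `diag(a, s)` times an upper unitriangular one, where
`s = d - c a⁻¹ b` is the Schur complement, so it is invertible iff `s ≠ 0`; for `a = 0` it is a
row swap of `!![c, d; 0, b]`, hence invertible iff `b ≠ 0` and `c ≠ 0`. On the quaternionic side,
`a⁻¹ = ā / |a|²` turns the expression under the square root into `|a|² |s|²` when `a ≠ 0`, and it
is `|b|² |c|²` when `a = 0`.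
-/

namespace Matrix

variable {K : Type*} [DivisionRing K] {a b c d : K}

theorem isUnit_fin_two_lower (x : K) : IsUnit !![1, 0; x, 1] :=
  isUnit_iff_exists.2 ⟨!![1, 0; -x, 1], by simp [one_fin_two], by simp [one_fin_two]⟩

theorem isUnit_fin_two_upper (x : K) : IsUnit !![1, x; 0, 1] :=
  isUnit_iff_exists.2 ⟨!![1, -x; 0, 1], by simp [one_fin_two], by simp [one_fin_two]⟩

theorem isUnit_fin_two_swap : IsUnit (!![0, 1; 1, 0] : Matrix (Fin 2) (Fin 2) K) :=
  isUnit_iff_exists.2 ⟨!![0, 1; 1, 0], by simp [one_fin_two], by simp [one_fin_two]⟩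

theorem isUnit_fin_two_diagonal (ha : a ≠ 0) (hd : d ≠ 0) : IsUnit !![a, 0; 0, d] := by
  have hv : IsUnit ![a, d] := Pi.isUnit_iff.2 fun i => by fin_cases i <;> simpa
  simpa [diagonal_fin_two] using hv.map (diagonalRingHom (Fin 2) K)

theorem fin_two_eq_lower_mul_diagonal_mul_upper (ha : a ≠ 0) :
    !![a, b; c, d] =
      !![1, 0; c * a⁻¹, 1] * !![a, 0; 0, d - c * a⁻¹ * b] * !![1, a⁻¹ * b; 0, 1] := by
  simp [mul_assoc, ha]

theorem isUnit_fin_two_iff_of_ne_zero (ha : a ≠ 0) :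
    IsUnit !![a, b; c, d] ↔ d - c * a⁻¹ * b ≠ 0 := by
  constructor
  · intro hM hs
    have hv : ![-(c * a⁻¹), 1] = 0 :=
      vecMul_injective_of_isUnit hM <| by
        simpa [mul_assoc, ha, ← sub_eq_neg_add] using hs
    simpa using congrFun hv 1
  · intro hs
    rw [fin_two_eq_lower_mul_diagonal_mul_upper ha]
    exact ((isUnit_fin_two_lower _).mul (isUnit_fin_two_diagonal ha hs)).mul
      (isUnit_fin_two_upper _)

theorem isUnit_fin_two_iff_of_eq_zero (ha : a = 0) :
    IsUnit !![a, b; c, d] ↔ b ≠ 0 ∧ c ≠ 0 := by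
  subst ha
  constructor
  · intro hM
    refine ⟨fun hb => ?_, fun hc => ?_⟩
    · have hv : (![1, 0] : Fin 2 → K) = 0 := vecMul_injective_of_isUnit hM (by simp [hb])
      simpa using congrFun hv 0
    · have hv : (![1, 0] : Fin 2 → K) = 0 := mulVec_injective_of_isUnit hM (by simp [hc])
      simpa using congrFun hv 0
  · rintro ⟨hb, hc⟩
    have hswap : !![0, b; c, d] = !![0, 1; 1, 0] * !![c, d; 0, b] := by simp
    rw [hswap]
    exact isUnit_fin_two_swap.mul ((isUnit_fin_two_iff_of_ne_zero hc).2 (by simpa))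

end Matrix

namespace Quaternion

variable {R : Type*}

theorem normSq_sub [CommRing R] (a b : ℍ[R]) :
    normSq (a - b) = normSq a + normSq b - 2 * (a * star b).re := by
  rw [sub_eq_add_neg, normSq_add, normSq_neg, star_neg, mul_neg, re_neg]
  ring

theorem re_mul_star_comm [CommRing R] (a b : ℍ[R]) :
    (a * star b).re = (b * star a).re := by
  rw [← re_star, star_mul, star_star]

theorem normSq_pos [CommRing R] [LinearOrder R] [IsStrictOrderedRing R] {a : ℍ[R]} :
    0 < normSq a ↔ a ≠ 0 :=
  normSq_nonneg.lt_iff_ne'.trans normSq_ne_zero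

theorem normSq_mul_normSq_sub_mul_inv_mul [Field R] [LinearOrder R] [IsStrictOrderedRing R]
    {a : ℍ[R]} (ha : a ≠ 0) (b c d : ℍ[R]) :
    normSq a * normSq (d - c * a⁻¹ * b) =
      normSq a * normSq d + normSq c * normSq b - 2 * (c * star a * b * star d).re := by
  have hinv : c * a⁻¹ * b = (normSq a)⁻¹ • (c * star a * b) := by
    rw [inv_def, mul_smul_comm, smul_mul_assoc]
  have hna : normSq a ≠ 0 := normSq_ne_zero.2 ha
  rw [hinv, normSq_sub, normSq_smul, star_smul, mul_smul_comm, re_smul, smul_eq_mul,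
    re_mul_star_comm d, map_mul, map_mul, normSq_star]
  field_simp

end Quaternion

open Quaternion in
theorem detH_fin_two_ne_zero_iff (a b c d : ℍ[ℝ]) :
    detH !![a, b; c, d] ≠ 0 ↔
      0 < normSq a * normSq d + normSq c * normSq b - 2 * (c * star a * b * star d).re := by
  simp [detH, Real.sqrt_ne_zero', sq, ← normSq_eq_norm_mul_self]

/-- A 2×2 quaternionic matrix is invertible iff its Dieudonné determinant is nonzero. -/
theorem isUnit_iff_detH_ne_zero (a b c d : ℍ[ℝ]) :
    IsUnit (!![a, b; c, d]) ↔ detH !![a, b; c, d] ≠ 0 := by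
  open Quaternion in
  rw [detH_fin_two_ne_zero_iff]
  rcases eq_or_ne a 0 with rfl | ha
  · simp only [Matrix.isUnit_fin_two_iff_of_eq_zero rfl, map_zero, zero_mul, star_zero,
      mul_zero, re_zero, zero_add, sub_zero]
    rw [(mul_nonneg normSq_nonneg normSq_nonneg).lt_iff_ne', mul_ne_zero_iff, normSq_ne_zero,
      normSq_ne_zero, and_comm]
  · rw [Matrix.isUnit_fin_two_iff_of_ne_zero ha, ← normSq_mul_normSq_sub_mul_inv_mul ha,
      mul_pos_iff_of_pos_left (normSq_pos.2 ha), normSq_pos]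
end

section
/- Let a, b, c, d be real quaternions with (c,d) ≠ (0,0) and let A = [[a,b],[c,d]]. Then det_ℍ(A) = 0 if and only if the fractional linear map is constant, i.e. there exists k ∈ ℍ such that (a·q + b)·(c·q + d)⁻¹ = k for every q ∈ ℍ with c·q + d ≠ 0. -/
open scoped Quaternion

/-!
Both sides say that the row `(a, b)` is a left multiple `k • (c, d)` of the row `(c, d)`.
For the determinant, `|c|² · det_ℍ² = ‖|c|² b - a c̄ d‖²`, so for `c ≠ 0` it vanishes exactly
when `b = a c⁻¹ d`. For the fractional linear map, `(a q + b)(c q + d)⁻¹ = k` means that `q` is a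
root of `(a - k c) q + (b - k d)`; such an affine map has at most one root unless it vanishes,
while `c q + d ≠ 0` holds for infinitely many `q`.
-/

section DivisionRing

variable {D : Type*} [DivisionRing D]

theorem subsingleton_setOf_mul_add_eq_zero {c d : D} (h : ¬(c = 0 ∧ d = 0)) :
    {q : D | c * q + d = 0}.Subsingleton := by
  intro q₁ hq₁ q₂ hq₂
  have hc : c ≠ 0 := fun hc => h ⟨hc, by simpa [hc] using hq₁⟩
  have hdiff : c * (q₁ - q₂) = 0 := by
    rw [mul_sub]; exact sub_eq_zero.2 (add_right_cancel (hq₁.trans hq₂.symm))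
  exact sub_eq_zero.1 ((mul_eq_zero.1 hdiff).resolve_left hc)

theorem exists_const_mul_add_mul_inv_iff [Infinite D] {a b c d : D} (h : ¬(c = 0 ∧ d = 0)) :
    (∃ k : D, ∀ q : D, c * q + d ≠ 0 → (a * q + b) * (c * q + d)⁻¹ = k) ↔
      ∃ k : D, a = k * c ∧ b = k * d := by
  constructor
  · rintro ⟨k, hk⟩
    obtain ⟨q₁, hq₁, q₂, hq₂, hne⟩ :=
      (subsingleton_setOf_mul_add_eq_zero h).finite.infinite_compl.nontrivial
    have hzero : ∀ q, c * q + d ≠ 0 → (a - k * c) * q + (b - k * d) = 0 := fun q hq =>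
      calc (a - k * c) * q + (b - k * d) = a * q + b - k * (c * q + d) := by noncomm_ring
        _ = 0 := sub_eq_zero.2 ((mul_inv_eq_iff_eq_mul₀ hq).1 (hk q hq))
    refine ⟨k, ?_⟩
    by_contra hk'
    exact hne (subsingleton_setOf_mul_add_eq_zero (c := a - k * c) (d := b - k * d)
      (by rwa [sub_eq_zero, sub_eq_zero]) (hzero q₁ hq₁) (hzero q₂ hq₂))
  · rintro ⟨k, rfl, rfl⟩
    refine ⟨k, fun q hq => ?_⟩
    rw [mul_assoc, ← mul_add, mul_assoc, mul_inv_cancel₀ hq, mul_one]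

end DivisionRing

open Quaternion

instance {R : Type*} [CommRing R] [Infinite R] : Infinite ℍ[R] :=
  Infinite.of_injective _ coe_injective

noncomputable def detHSq (a b c d : ℍ[ℝ]) : ℝ :=
  normSq a * normSq d + normSq c * normSq b - 2 * (c * star a * b * star d).re

theorem detH_eq_sqrt_detHSq (a b c d : ℍ[ℝ]) :
    detH !![a, b; c, d] = √(detHSq a b c d) := by
  simp [detH, detHSq, normSq_eq_norm_mul_self, pow_two]

theorem normSq_mul_detHSq (a b c d : ℍ[ℝ]) :
    normSq c * detHSq a b c d = normSq (normSq c • b - a * star c * d) := by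
  simp only [detHSq, normSq_def', re_mul, imI_mul, imJ_mul, imK_mul, re_sub, imI_sub, imJ_sub,
    imK_sub, re_star, imI_star, imJ_star, imK_star, re_smul, imI_smul, imJ_smul, imK_smul,
    smul_eq_mul]
  ring

theorem detHSq_zero_left (a b d : ℍ[ℝ]) : detHSq a b 0 d = normSq a * normSq d := by
  simp [detHSq]

theorem detHSq_of_ne_zero {c : ℍ[ℝ]} (hc : c ≠ 0) (a b d : ℍ[ℝ]) :
    detHSq a b c d = normSq c * normSq (b - a * c⁻¹ * d) := by
  have hnc : normSq c ≠ 0 := normSq_ne_zero.2 hc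
  have hstar : star c = normSq c • c⁻¹ := by rw [inv_def, smul_smul, mul_inv_cancel₀ hnc, one_smul]
  apply mul_left_cancel₀ hnc
  rw [normSq_mul_detHSq, hstar, mul_smul_comm, smul_mul_assoc, ← smul_sub, normSq_smul]
  ring

theorem detHSq_nonneg (a b c d : ℍ[ℝ]) : 0 ≤ detHSq a b c d := by
  rcases eq_or_ne c 0 with rfl | hc
  · rw [detHSq_zero_left]; exact mul_nonneg normSq_nonneg normSq_nonneg
  · rw [detHSq_of_ne_zero hc]; exact mul_nonneg normSq_nonneg normSq_nonneg

theorem detHSq_eq_zero_iff {a b c d : ℍ[ℝ]} (h : ¬(c = 0 ∧ d = 0)) :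
    detHSq a b c d = 0 ↔ ∃ k : ℍ[ℝ], a = k * c ∧ b = k * d := by
  rcases eq_or_ne c 0 with rfl | hc
  · have hd : d ≠ 0 := fun hd => h ⟨rfl, hd⟩
    rw [detHSq_zero_left, mul_eq_zero, normSq_eq_zero, normSq_eq_zero, or_iff_left hd]
    refine ⟨fun ha => ⟨b * d⁻¹, by simp [ha], (inv_mul_cancel_right₀ hd b).symm⟩, ?_⟩
    rintro ⟨k, rfl, -⟩
    exact mul_zero k
  · rw [detHSq_of_ne_zero hc, mul_eq_zero, normSq_eq_zero, normSq_eq_zero, or_iff_right hc,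
      sub_eq_zero]
    refine ⟨fun hb => ⟨a * c⁻¹, (inv_mul_cancel_right₀ hc a).symm, hb⟩, ?_⟩
    rintro ⟨k, rfl, rfl⟩
    rw [mul_inv_cancel_right₀ hc]

/-- The fractional linear map `q ↦ (aq+b)(cq+d)⁻¹` is constant if and only if the
Dieudonné determinant of `[[a,b],[c,d]]` vanishes. -/
theorem detH_eq_zero_iff_constant (a b c d : ℍ[ℝ]) (h : ¬(c = 0 ∧ d = 0)) :
    detH !![a, b; c, d] = 0 ↔
      ∃ k : ℍ[ℝ], ∀ q : ℍ[ℝ], c * q + d ≠ 0 → (a * q + b) * (c * q + d)⁻¹ = k := by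
  rw [detH_eq_sqrt_detHSq, Real.sqrt_eq_zero (detHSq_nonneg a b c d), detHSq_eq_zero_iff h,
    exists_const_mul_add_mul_inv_iff h]
end

section
/- Let α, β, γ be pairwise distinct real quaternions, and define L(q) = (γ − β)·(γ − α)⁻¹·(q − α)·(q − β)⁻¹ for q ∈ ℍ with q ≠ β. Then L(α) = 0 and L(γ) = 1. Moreover, if a, b, c, d ∈ ℍ satisfy det_ℍ([[a,b],[c,d]]) ≠ 0, a·α + b = 0, c·β + d = 0, and a·γ + b = c·γ + d, then c ≠ 0 and for every q ∈ ℍ with q ≠ β and c·q + d ≠ 0 one has (a·q + b)·(c·q + d)⁻¹ = c·(γ − β)·(γ − α)⁻¹·(q − α)·(q − β)⁻¹·c⁻¹. -/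
/-!
The normalisations `a α + b = 0` and `c β + d = 0` factor numerator and denominator as
`a (q - α)` and `c (q - β)`, and `a γ + b = c γ + d` then forces `a = c (γ - β) (γ - α)⁻¹`;
this is an identity in any division ring. The determinant only rules out `c = 0`, in which
case also `d = 0` and the bottom row of the matrix vanishes.
-/

open scoped Quaternion

section DivisionRing

variable {D : Type*} [DivisionRing D]

theorem mul_add_eq_mul_sub_of_mul_add_eq_zero {a b α : D} (h : a * α + b = 0) (q : D) :
    a * q + b = a * (q - α) := by
  rw [mul_sub, sub_eq_add_neg, eq_neg_of_add_eq_zero_right h]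

theorem eq_mul_mul_inv_of_three_points {a b c d α β γ : D} (hγα : γ ≠ α)
    (hα : a * α + b = 0) (hβ : c * β + d = 0) (hγ : a * γ + b = c * γ + d) :
    a = c * (γ - β) * (γ - α)⁻¹ := by
  rw [eq_mul_inv_iff_mul_eq₀ (sub_ne_zero.mpr hγα)]
  rwa [mul_add_eq_mul_sub_of_mul_add_eq_zero hα, mul_add_eq_mul_sub_of_mul_add_eq_zero hβ]
    at hγ

theorem mul_add_mul_inv_eq_conj_of_three_points {a b c d α β γ : D} (hγα : γ ≠ α)
    (hα : a * α + b = 0) (hβ : c * β + d = 0) (hγ : a * γ + b = c * γ + d) (q : D) :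
    (a * q + b) * (c * q + d)⁻¹ = c * ((γ - β) * (γ - α)⁻¹ * (q - α) * (q - β)⁻¹) * c⁻¹ := by
  rw [mul_add_eq_mul_sub_of_mul_add_eq_zero hα, mul_add_eq_mul_sub_of_mul_add_eq_zero hβ,
    eq_mul_mul_inv_of_three_points hγα hα hβ hγ, mul_inv_rev]
  simp only [mul_assoc]

end DivisionRing

theorem detH_eq_zero_of_bottom_row_zero (a b : ℍ[ℝ]) : detH !![a, b; 0, 0] = 0 := by
  simp [detH]

theorem flt_mapping_zero_one_infty_general (α β γ : ℍ[ℝ])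
    (hαγ : α ≠ γ) (hβγ : β ≠ γ) :
    ((γ - β) * (γ - α)⁻¹ * (α - α) * (α - β)⁻¹ = 0 ∧
      (γ - β) * (γ - α)⁻¹ * (γ - α) * (γ - β)⁻¹ = 1) ∧
    (∀ a b c d : ℍ[ℝ], detH !![a, b; c, d] ≠ 0 →
      a * α + b = 0 → c * β + d = 0 → a * γ + b = c * γ + d →
      c ≠ 0 ∧ ∀ q : ℍ[ℝ], q ≠ β → c * q + d ≠ 0 →
        (a * q + b) * (c * q + d)⁻¹ =
          c * ((γ - β) * (γ - α)⁻¹ * (q - α) * (q - β)⁻¹) * c⁻¹) := by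
  refine ⟨⟨by simp, ?_⟩, fun a b c d hdet hα hβ hγ => ⟨?_, fun q _ _ => ?_⟩⟩
  · rw [inv_mul_cancel_right₀ (sub_ne_zero.mpr hαγ.symm),
      mul_inv_cancel₀ (sub_ne_zero.mpr hβγ.symm)]
  · rintro rfl
    obtain rfl : d = 0 := by simpa using hβ
    exact hdet (detH_eq_zero_of_bottom_row_zero a b)
  · exact mul_add_mul_inv_eq_conj_of_three_points hαγ.symm hα hβ hγ q

/-- The fractional linear transformation `q ↦ (γ-β)(γ-α)⁻¹(q-α)(q-β)⁻¹` maps `α` to `0`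
and `γ` to `1`; moreover any fractional linear transformation sending `α ↦ 0`, `β ↦ ∞`,
`γ ↦ 1` is a conjugate of it by some nonzero quaternion. -/
theorem flt_mapping_zero_one_infty (α β γ : ℍ[ℝ])
    (hαβ : α ≠ β) (hαγ : α ≠ γ) (hβγ : β ≠ γ) :
    ((γ - β) * (γ - α)⁻¹ * (α - α) * (α - β)⁻¹ = 0 ∧
      (γ - β) * (γ - α)⁻¹ * (γ - α) * (γ - β)⁻¹ = 1) ∧
    (∀ a b c d : ℍ[ℝ], detH !![a, b; c, d] ≠ 0 →
      a * α + b = 0 → c * β + d = 0 → a * γ + b = c * γ + d →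
      c ≠ 0 ∧ ∀ q : ℍ[ℝ], q ≠ β → c * q + d ≠ 0 →
        (a * q + b) * (c * q + d)⁻¹ =
          c * ((γ - β) * (γ - α)⁻¹ * (q - α) * (q - β)⁻¹) * c⁻¹) :=
  flt_mapping_zero_one_infty_general α β γ hαγ hβγ
end
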